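/- With X = (Y₁, Z₁), V̂ = M_Z Y₁, β̂_ols := (Y₁^⊤M_{Z₁}Y₁)^{-1}Y₁^⊤M_{Z₁}Y₂ and β̂_{2sls} := (Y₁^⊤(P_Z−P_{Z₁})Y₁)^{-1}Y₁^⊤(P_Z−P_{Z₁})Y₂, the vector V̂^⊤ M_X Y₂ equals Y₁^⊤(P_Z − P_{Z₁})Y₁ (β̂_ols − β̂_{2sls}). -/

import Mathlib

open Matrix

noncomputable def proj {n : ℕ} {m : Type*} [Fintype m] [DecidableEq m]
    (A : Matrix (Fin n) m ℝ) : Matrix (Fin n) (Fin n) ℝ :=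
  A * (Aᵀ * A)⁻¹ * Aᵀ

noncomputable def annih {n : ℕ} {m : Type*} [Fintype m] [DecidableEq m]
    (A : Matrix (Fin n) m ℝ) : Matrix (Fin n) (Fin n) ℝ :=
  1 - proj A

lemma proj_transpose {n : ℕ} {m : Type*} [Fintype m] [DecidableEq m]
    (A : Matrix (Fin n) m ℝ) : (proj A)ᵀ = proj A := by
  have h : ((Aᵀ * A)⁻¹)ᵀ = (Aᵀ * A)⁻¹ := by
    rw [Matrix.transpose_nonsing_inv, Matrix.transpose_mul, Matrix.transpose_transpose]
  simp [proj, Matrix.transpose_mul, h, Matrix.mul_assoc]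

lemma annih_transpose {n : ℕ} {m : Type*} [Fintype m] [DecidableEq m]
    (A : Matrix (Fin n) m ℝ) : (annih A)ᵀ = annih A := by
  simp [annih, transpose_sub, proj_transpose]

lemma proj_mul_self {n : ℕ} {m : Type*} [Fintype m] [DecidableEq m]
    (A : Matrix (Fin n) m ℝ) (h : Invertible (Aᵀ * A)) : proj A * A = A := by
  simp only [proj, Matrix.mul_assoc]
  rw [Matrix.inv_mul_of_invertible, Matrix.mul_one]

lemma annih_mul_self {n : ℕ} {m : Type*} [Fintype m] [DecidableEq m]
    (A : Matrix (Fin n) m ℝ) (h : Invertible (Aᵀ * A)) : annih A * A = 0 := by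
  rw [annih, Matrix.sub_mul, Matrix.one_mul, proj_mul_self A h, sub_self]

theorem stmt_8 {n d k₁ k₂ : ℕ}
    (Y₁ : Matrix (Fin n) (Fin d) ℝ) (Y₂ : Matrix (Fin n) (Fin 1) ℝ)
    (Z₁ : Matrix (Fin n) (Fin k₁) ℝ) (Z₂ : Matrix (Fin n) (Fin k₂) ℝ)
    (Z : Matrix (Fin n) (Fin k₁ ⊕ Fin k₂) ℝ) (hZ : Z = fromCols Z₁ Z₂)
    (X : Matrix (Fin n) (Fin d ⊕ Fin k₁) ℝ) (hX : X = fromCols Y₁ Z₁)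
    (Vhat : Matrix (Fin n) (Fin d) ℝ) (hV : Vhat = annih Z * Y₁)
    (hZZ : Invertible (Zᵀ * Z)) (hZ₁Z₁ : Invertible (Z₁ᵀ * Z₁))
    (hXX : Invertible (Xᵀ * X)) (hYMY : Invertible (Y₁ᵀ * annih Z₁ * Y₁))
    (hYPY : Invertible (Y₁ᵀ * (proj Z - proj Z₁) * Y₁))
    (βols β2sls : Matrix (Fin d) (Fin 1) ℝ)
    (hβols : βols = (Y₁ᵀ * annih Z₁ * Y₁)⁻¹ * (Y₁ᵀ * annih Z₁ * Y₂))
    (hβ2sls : β2sls = (Y₁ᵀ * (proj Z - proj Z₁) * Y₁)⁻¹ *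
      (Y₁ᵀ * (proj Z - proj Z₁) * Y₂)) :
    Vhatᵀ * annih X * Y₂ = Y₁ᵀ * (proj Z - proj Z₁) * Y₁ * (βols - β2sls) := by
  set D := Y₁ᵀ * annih Z₁ * Y₁ with hD
  set G := Y₁ᵀ * (proj Z - proj Z₁) * Y₁ with hG
  set W := annih Z₁ * Y₁ with hWdef
  -- basic column extraction facts
  have hZ₁eq : Z * fromRows (1 : Matrix (Fin k₁) (Fin k₁) ℝ) (0 : Matrix (Fin k₂) (Fin k₁) ℝ) = Z₁ := by
    rw [hZ, fromCols_mul_fromRows]; simp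
  have hY₁eq : X * fromRows (1 : Matrix (Fin d) (Fin d) ℝ) (0 : Matrix (Fin k₁) (Fin d) ℝ) = Y₁ := by
    rw [hX, fromCols_mul_fromRows]; simp
  have hZ₁eqX : X * fromRows (0 : Matrix (Fin d) (Fin k₁) ℝ) (1 : Matrix (Fin k₁) (Fin k₁) ℝ) = Z₁ := by
    rw [hX, fromCols_mul_fromRows]; simp
  have hPXX : proj X * X = X := proj_mul_self X hXX
  have hPXY₁ : proj X * Y₁ = Y₁ := by rw [← hY₁eq, ← Matrix.mul_assoc, hPXX]
  have hPXZ₁ : proj X * Z₁ = Z₁ := by rw [← hZ₁eqX, ← Matrix.mul_assoc, hPXX]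
  have hMZZ₁ : annih Z * Z₁ = 0 := by
    rw [← hZ₁eq, ← Matrix.mul_assoc, annih_mul_self Z hZZ, Matrix.zero_mul]
  have hMZP₁ : annih Z * proj Z₁ = 0 := by
    rw [proj, ← Matrix.mul_assoc, ← Matrix.mul_assoc, hMZZ₁, Matrix.zero_mul, Matrix.zero_mul]
  have hMZM₁ : annih Z * annih Z₁ = annih Z := by
    rw [show annih Z₁ = 1 - proj Z₁ from rfl, Matrix.mul_sub, Matrix.mul_one, hMZP₁, sub_zero]
  have hM₁Z₁ : annih Z₁ * Z₁ = 0 := annih_mul_self Z₁ hZ₁Z₁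
  -- W facts
  have hWt : Wᵀ = Y₁ᵀ * annih Z₁ := by
    rw [hWdef, Matrix.transpose_mul, annih_transpose]
  have hWalt : W = Y₁ - Z₁ * ((Z₁ᵀ * Z₁)⁻¹ * (Z₁ᵀ * Y₁)) := by
    rw [hWdef, annih, proj, Matrix.sub_mul, Matrix.one_mul, Matrix.mul_assoc, Matrix.mul_assoc]
  have hPXW : proj X * W = W := by
    rw [hWalt, Matrix.mul_sub, hPXY₁, ← Matrix.mul_assoc, hPXZ₁]
  -- symmetry of D⁻¹
  have hDt : Dᵀ = D := by
    rw [hD, Matrix.transpose_mul, Matrix.transpose_mul, annih_transpose,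
      Matrix.transpose_transpose, Matrix.mul_assoc]
  have hDinvT : (D⁻¹)ᵀ = D⁻¹ := by rw [Matrix.transpose_nonsing_inv, hDt]
  -- Q = proj X
  set Q := proj Z₁ + W * D⁻¹ * Wᵀ with hQdef
  have hQt : Qᵀ = Q := by
    rw [hQdef, Matrix.transpose_add, proj_transpose]
    congr 1
    rw [Matrix.transpose_mul (W * D⁻¹) Wᵀ, Matrix.transpose_mul W D⁻¹,
      Matrix.transpose_transpose, hDinvT]
    simp only [hWdef, Matrix.transpose_mul, annih_transpose, Matrix.mul_assoc]
  have hWtZ₁ : Wᵀ * Z₁ = 0 := by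
    rw [hWt, Matrix.mul_assoc, hM₁Z₁, Matrix.mul_zero]
  have hQZ₁ : Q * Z₁ = Z₁ := by
    rw [hQdef, Matrix.add_mul, proj_mul_self Z₁ hZ₁Z₁, Matrix.mul_assoc, hWtZ₁,
      Matrix.mul_zero, add_zero]
  have hWtY₁ : Wᵀ * Y₁ = D := by rw [hWt, hD, Matrix.mul_assoc]
  have hQY₁ : Q * Y₁ = Y₁ := by
    have h1 : W * D⁻¹ * Wᵀ * Y₁ = W := by
      rw [Matrix.mul_assoc, hWtY₁, Matrix.mul_assoc, Matrix.inv_mul_of_invertible,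
        Matrix.mul_one]
    rw [hQdef, Matrix.add_mul, h1, hWdef, annih, Matrix.sub_mul, Matrix.one_mul]
    abel
  have hQX : Q * X = X := by
    rw [hX, Matrix.mul_fromCols, hQY₁, hQZ₁]
  have hQPX : Q * proj X = proj X := by
    rw [proj, ← Matrix.mul_assoc, ← Matrix.mul_assoc, hQX]
  have hPXQ : proj X * Q = Q := by
    have h1 : proj X * proj Z₁ = proj Z₁ := by
      rw [show proj Z₁ = Z₁ * (Z₁ᵀ * Z₁)⁻¹ * Z₁ᵀ from rfl, ← Matrix.mul_assoc,
        ← Matrix.mul_assoc, hPXZ₁]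
    rw [hQdef, Matrix.mul_add, h1, ← Matrix.mul_assoc, ← Matrix.mul_assoc, hPXW]
  have hQ : Q = proj X := by
    have h2 : Q * proj X = Q := by
      have := congrArg Matrix.transpose hPXQ
      rwa [Matrix.transpose_mul, hQt, proj_transpose] at this
    rw [← hQPX, h2]
  -- compute annih Z * Q
  have hMZQ : annih Z * Q = annih Z * Y₁ * D⁻¹ * Wᵀ := by
    rw [hQdef, Matrix.mul_add, hMZP₁, zero_add, ← Matrix.mul_assoc, ← Matrix.mul_assoc,
      hWdef, ← Matrix.mul_assoc, hMZM₁]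
  -- key decomposition: annih Z = annih Z₁ - (proj Z - proj Z₁)
  have hsplit : annih Z = annih Z₁ - (proj Z - proj Z₁) := by
    simp only [annih]; abel
  have hMZY₁ : Y₁ᵀ * annih Z * Y₁ = D - G := by
    rw [hsplit, Matrix.mul_sub, Matrix.sub_mul, hD, hG]
  have hMZY₂ : Y₁ᵀ * annih Z * Y₂ = Y₁ᵀ * annih Z₁ * Y₂ - Y₁ᵀ * (proj Z - proj Z₁) * Y₂ := by
    rw [hsplit, Matrix.mul_sub, Matrix.sub_mul]
  -- final computation
  have hVt : Vhatᵀ = Y₁ᵀ * annih Z := by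
    rw [hV, Matrix.transpose_mul, annih_transpose]
  have hannX : annih X = 1 - Q := by rw [annih, hQ]
  have lhs_eq : Vhatᵀ * annih X * Y₂
      = Y₁ᵀ * annih Z * Y₂ - (Y₁ᵀ * annih Z * Y₁) * D⁻¹ * (Y₁ᵀ * annih Z₁ * Y₂) := by
    rw [hVt, hannX, Matrix.mul_sub, Matrix.mul_one, Matrix.sub_mul]
    congr 1
    rw [Matrix.mul_assoc Y₁ᵀ (annih Z) Q, hMZQ, hWt]
    simp only [Matrix.mul_assoc]
  rw [lhs_eq, hMZY₁, hMZY₂, hβols, hβ2sls]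
  have hDDinv : D * D⁻¹ = 1 := Matrix.mul_inv_of_invertible D
  have hGGinv : G * G⁻¹ = 1 := Matrix.mul_inv_of_invertible G
  rw [Matrix.sub_mul D G, Matrix.mul_sub G]
  rw [show (D * D⁻¹ - G * D⁻¹) * (Y₁ᵀ * annih Z₁ * Y₂)
      = Y₁ᵀ * annih Z₁ * Y₂ - G * (D⁻¹ * (Y₁ᵀ * annih Z₁ * Y₂)) by
    rw [Matrix.sub_mul, hDDinv, Matrix.one_mul]
    simp only [Matrix.mul_assoc]]
  rw [show G * (G⁻¹ * (Y₁ᵀ * (proj Z - proj Z₁) * Y₂))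
      = Y₁ᵀ * (proj Z - proj Z₁) * Y₂ by
    rw [← Matrix.mul_assoc, hGGinv, Matrix.one_mul]]
  abel
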